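/- Let ω > 0 and q > p > 1 be real numbers, let f(u) = -ω u + u^p - u^q for u > 0, and define f̃(u) = (u f'(u))' f(u) - u f'(u)^2. Then f̃(u) < 0 for every u > 0 if and only if there exists u > 0 with f(u) > 0. -/

import Mathlib

/-!
Since `f u = u * (u^(p-1) - u^(q-1) - ω)` and
`f̃ u = -u^p * (ω (p-1)^2 + (q-p)^2 u^(q-1) - ω (q-1)^2 u^(q-p))`, both conditions say that a
function of the shape `c u^α - d u^β` with `0 < α < β` stays on one side of a constant. By weighted
AM-GM such a function attains its maximum `(1 - α/β) c x^α` at the point `x` with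
`x^(β-α) = α c / (β d)`. For the maximiser `u₂` of the function coming from `f̃` and the maximiser
`u₁` of the one coming from `f`, the first condition amounts to `u₂^(q-p) < u₁^(q-p)` and the
second to `u₂^(p-1) < u₁^(p-1)`; both say `u₂ < u₁`.
-/

section Peak

variable {α β c d x : ℝ}

lemma mul_rpow_eq_of_rpow_sub_eq (hα : 0 < α) (hαβ : α < β) (hc : 0 < c) (hx : 0 < x)
    (hxc : x ^ (β - α) = α * c / (β * d)) : d * x ^ β = α / β * c * x ^ α := by
  have hd : d ≠ 0 := by
    rintro rfl
    rw [mul_zero, div_zero] at hxc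
    exact (Real.rpow_pos_of_pos hx _).ne' hxc
  have hβ : β ≠ 0 := (hα.trans hαβ).ne'
  rw [Real.rpow_sub hx, div_eq_iff (Real.rpow_pos_of_pos hx α).ne'] at hxc
  rw [hxc]
  field_simp

lemma mul_rpow_sub_mul_rpow_le (hα : 0 < α) (hαβ : α < β) (hc : 0 < c) (hx : 0 < x)
    (hxc : x ^ (β - α) = α * c / (β * d)) {u : ℝ} (hu : 0 ≤ u) :
    c * u ^ α - d * u ^ β ≤ (1 - α / β) * c * x ^ α := by
  have hβ : 0 < β := hα.trans hαβ
  have amgm := Real.geom_mean_le_arith_mean2_weighted (p₁ := (u / x) ^ β) (p₂ := 1)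
    (div_pos hα hβ).le (by rw [sub_nonneg, div_le_one hβ]; exact hαβ.le) (by positivity)
    zero_le_one (add_sub_cancel _ _)
  rw [Real.one_rpow, mul_one, mul_one, ← Real.rpow_mul (by positivity), mul_div_cancel₀ _ hβ.ne',
    Real.div_rpow hu hx.le, Real.div_rpow hu hx.le] at amgm
  have hd := mul_rpow_eq_of_rpow_sub_eq hα hαβ hc hx hxc
  calc c * u ^ α - d * u ^ β = c * x ^ α * (u ^ α / x ^ α) - d * u ^ β := by field_simp
    _ ≤ c * x ^ α * (α / β * (u ^ β / x ^ β) + (1 - α / β)) - d * u ^ β := by gcongr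
    _ = (1 - α / β) * c * x ^ α := by
      have hd' : d = α / β * c * x ^ α / x ^ β := by rw [← hd]; field_simp
      rw [hd']
      field_simp
      ring

lemma mul_rpow_sub_mul_rpow_eq (hα : 0 < α) (hαβ : α < β) (hc : 0 < c) (hx : 0 < x)
    (hxc : x ^ (β - α) = α * c / (β * d)) :
    c * x ^ α - d * x ^ β = (1 - α / β) * c * x ^ α := by
  rw [mul_rpow_eq_of_rpow_sub_eq hα hαβ hc hx hxc]
  ring

lemma forall_mul_rpow_sub_mul_rpow_lt_iff (hα : 0 < α) (hαβ : α < β) (hc : 0 < c) (hx : 0 < x)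
    (hxc : x ^ (β - α) = α * c / (β * d)) {K : ℝ} :
    (∀ u, 0 < u → c * u ^ α - d * u ^ β < K) ↔ (1 - α / β) * c * x ^ α < K :=
  ⟨fun h => mul_rpow_sub_mul_rpow_eq hα hαβ hc hx hxc ▸ h x hx,
    fun h _ hu => (mul_rpow_sub_mul_rpow_le hα hαβ hc hx hxc hu.le).trans_lt h⟩

lemma exists_lt_mul_rpow_sub_mul_rpow_iff (hα : 0 < α) (hαβ : α < β) (hc : 0 < c) (hx : 0 < x)
    (hxc : x ^ (β - α) = α * c / (β * d)) {K : ℝ} :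
    (∃ u, 0 < u ∧ K < c * u ^ α - d * u ^ β) ↔ K < (1 - α / β) * c * x ^ α :=
  ⟨fun ⟨_, hu, h⟩ => h.trans_le (mul_rpow_sub_mul_rpow_le hα hαβ hc hx hxc hu.le),
    fun h => ⟨x, hx, mul_rpow_sub_mul_rpow_eq hα hαβ hc hx hxc ▸ h⟩⟩

end Peak

noncomputable def doublePower (ω p q u : ℝ) : ℝ := -ω * u + u ^ p - u ^ q

noncomputable def tilde (f : ℝ → ℝ) (u : ℝ) : ℝ :=
  deriv (fun v => v * deriv f v) u * f u - u * deriv f u ^ 2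

lemma hasDerivAt_linear_add_rpow_add_rpow (a b c p q : ℝ) {u : ℝ} (hu : u ≠ 0) :
    HasDerivAt (fun v => a * v + b * v ^ p + c * v ^ q)
      (a + b * (p * u ^ (p - 1)) + c * (q * u ^ (q - 1))) u := by
  refine ((((hasDerivAt_id' u).const_mul a).add
    ((Real.hasDerivAt_rpow_const (p := p) (Or.inl hu)).const_mul b)).add
    ((Real.hasDerivAt_rpow_const (p := q) (Or.inl hu)).const_mul c)).congr_deriv ?_
  ring

lemma rpow_eq_mul_rpow_sub_one {u : ℝ} (hu : 0 < u) (p : ℝ) : u ^ p = u * u ^ (p - 1) := by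
  rw [Real.rpow_sub_one hu.ne']
  field_simp

section DoublePower

variable {ω p q u : ℝ}

lemma deriv_doublePower (hu : 0 < u) :
    deriv (doublePower ω p q) u = -ω + p * u ^ (p - 1) - q * u ^ (q - 1) := by
  have h := hasDerivAt_linear_add_rpow_add_rpow (-ω) 1 (-1) p q hu.ne'
  rw [show (fun v => -ω * v + 1 * v ^ p + -1 * v ^ q) = doublePower ω p q by
    funext v; simp only [doublePower]; ring] at h
  rw [h.deriv]
  ring

lemma deriv_mul_deriv_doublePower (hu : 0 < u) :
    deriv (fun v => v * deriv (doublePower ω p q) v) u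
      = -ω + p ^ 2 * u ^ (p - 1) - q ^ 2 * u ^ (q - 1) := by
  have h := hasDerivAt_linear_add_rpow_add_rpow (-ω) p (-q) p q hu.ne'
  have heq : (fun v => -ω * v + p * v ^ p + -q * v ^ q)
      =ᶠ[nhds u] fun v => v * deriv (doublePower ω p q) v := by
    filter_upwards [Ioi_mem_nhds hu] with v hv
    rw [deriv_doublePower hv, rpow_eq_mul_rpow_sub_one hv p, rpow_eq_mul_rpow_sub_one hv q]
    ring
  rw [(h.congr_of_eventuallyEq heq.symm).deriv]
  ring

lemma tilde_doublePower (hu : 0 < u) :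
    tilde (doublePower ω p q) u
      = -u ^ p * (ω * (p - 1) ^ 2 + (q - p) ^ 2 * u ^ (q - 1) - ω * (q - 1) ^ 2 * u ^ (q - p)) := by
  have hq : u ^ (q - 1) = u ^ (p - 1) * u ^ (q - p) := by
    rw [← Real.rpow_add hu]; ring_nf
  simp only [tilde, deriv_mul_deriv_doublePower hu, deriv_doublePower hu, doublePower]
  rw [rpow_eq_mul_rpow_sub_one hu p, rpow_eq_mul_rpow_sub_one hu q, hq]
  ring

lemma tilde_doublePower_neg_iff (hu : 0 < u) :
    tilde (doublePower ω p q) u < 0 ↔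
      ω * (q - 1) ^ 2 * u ^ (q - p) - (q - p) ^ 2 * u ^ (q - 1) < ω * (p - 1) ^ 2 := by
  rw [tilde_doublePower hu, neg_mul, neg_lt_zero, mul_pos_iff_of_pos_left (by positivity)]
  constructor <;> intro h <;> linarith

lemma doublePower_pos_iff (hu : 0 < u) :
    0 < doublePower ω p q u ↔ ω < u ^ (p - 1) - u ^ (q - 1) := by
  rw [doublePower, rpow_eq_mul_rpow_sub_one hu p, rpow_eq_mul_rpow_sub_one hu q,
    show -ω * u + u * u ^ (p - 1) - u * u ^ (q - 1) = u * (u ^ (p - 1) - u ^ (q - 1) - ω) by ring,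
    mul_pos_iff_of_pos_left hu, sub_pos]

end DoublePower

lemma peak_lt_iff_lt_peak {ω p q u₁ u₂ : ℝ} (hω : 0 < ω) (hp : 1 < p) (hpq : p < q)
    (hu₁ : 0 < u₁) (hu₂ : 0 < u₂)
    (h₁ : u₁ ^ (q - p) = (p - 1) / (q - 1)) (h₂ : u₂ ^ (p - 1) = ω * (q - 1) / (q - p)) :
    (1 - (q - p) / (q - 1)) * (ω * (q - 1) ^ 2) * u₂ ^ (q - p) < ω * (p - 1) ^ 2 ↔
      ω < (1 - (p - 1) / (q - 1)) * 1 * u₁ ^ (p - 1) := by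
  have hq : 0 < q - 1 := by linarith
  have hqp : 0 < q - p := by linarith
  have hk : 0 < ω * (p - 1) * (q - 1) := mul_pos (mul_pos hω (by linarith)) hq
  calc (1 - (q - p) / (q - 1)) * (ω * (q - 1) ^ 2) * u₂ ^ (q - p) < ω * (p - 1) ^ 2
        ↔ ω * (p - 1) * (q - 1) * u₂ ^ (q - p) < ω * (p - 1) * (q - 1) * u₁ ^ (q - p) := by
          rw [h₁]
          constructor <;> intro h <;> field_simp at h ⊢ <;> linarith
      _ ↔ u₂ ^ (q - p) < u₁ ^ (q - p) := mul_lt_mul_iff_of_pos_left hk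
      _ ↔ u₂ < u₁ := Real.rpow_lt_rpow_iff hu₂.le hu₁.le hqp
      _ ↔ u₂ ^ (p - 1) < u₁ ^ (p - 1) := (Real.rpow_lt_rpow_iff hu₂.le hu₁.le (by linarith)).symm
      _ ↔ ω < (1 - (p - 1) / (q - 1)) * 1 * u₁ ^ (p - 1) := by
          rw [h₂, div_lt_iff₀ hqp]
          constructor <;> intro h <;> field_simp at h ⊢ <;> linarith

/-- For `f u = -ω u + u^p - u^q` with `ω > 0`, `q > p > 1`,
`f̃ u < 0` for every `u > 0` iff there exists `u > 0` with `f u > 0`. -/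
theorem stmt_10 (ω p q : ℝ) (hω : 0 < ω) (hp : 1 < p) (hpq : p < q)
    (f : ℝ → ℝ) (hf : f = fun u : ℝ => -ω * u + u ^ p - u ^ q)
    (ftilde : ℝ → ℝ)
    (hftilde : ftilde = fun u : ℝ =>
      deriv (fun v : ℝ => v * deriv f v) u * f u - u * (deriv f u) ^ 2) :
    (∀ u : ℝ, 0 < u → ftilde u < 0) ↔ (∃ u : ℝ, 0 < u ∧ 0 < f u) := by
  have hq : 0 < q - 1 := by linarith
  have hqp : 0 < q - p := by linarith
  obtain ⟨u₁, hu₁, h₁⟩ : ∃ x : ℝ, 0 < x ∧ x ^ (q - p) = (p - 1) / (q - 1) :=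
    ⟨_, Real.rpow_pos_of_pos (div_pos (by linarith) hq) _,
      Real.rpow_inv_rpow (div_pos (by linarith) hq).le hqp.ne'⟩
  obtain ⟨u₂, hu₂, h₂⟩ : ∃ x : ℝ, 0 < x ∧ x ^ (p - 1) = ω * (q - 1) / (q - p) :=
    ⟨_, Real.rpow_pos_of_pos (by positivity) _, Real.rpow_inv_rpow (by positivity) (by linarith)⟩
  have hf' : f = doublePower ω p q := hf
  have hft : ftilde = tilde f := hftilde
  subst hf' hft
  calc (∀ u, 0 < u → tilde (doublePower ω p q) u < 0)
      ↔ ∀ u, 0 < u → ω * (q - 1) ^ 2 * u ^ (q - p) - (q - p) ^ 2 * u ^ (q - 1) < ω * (p - 1) ^ 2 :=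
        forall₂_congr fun _ hu => tilde_doublePower_neg_iff hu
    _ ↔ (1 - (q - p) / (q - 1)) * (ω * (q - 1) ^ 2) * u₂ ^ (q - p) < ω * (p - 1) ^ 2 :=
        forall_mul_rpow_sub_mul_rpow_lt_iff hqp (by linarith) (by positivity) hu₂ (by
          rw [sub_sub_sub_cancel_left, h₂]; field_simp)
    _ ↔ ω < (1 - (p - 1) / (q - 1)) * 1 * u₁ ^ (p - 1) :=
        peak_lt_iff_lt_peak hω hp hpq hu₁ hu₂ h₁ h₂
    _ ↔ ∃ u, 0 < u ∧ ω < 1 * u ^ (p - 1) - 1 * u ^ (q - 1) :=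
        (exists_lt_mul_rpow_sub_mul_rpow_iff (by linarith) (by linarith) one_pos hu₁ (by
          rw [sub_sub_sub_cancel_right, h₁]; ring)).symm
    _ ↔ ∃ u, 0 < u ∧ 0 < doublePower ω p q u := by
        simp only [one_mul]
        exact exists_congr fun _ => and_congr_right fun hu => (doublePower_pos_iff hu).symm
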